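/- arXiv:2101.10052 — 4 statements merged into one kernel-verified Lean document; each statement's English description precedes it below -/
import Mathlib

section
/- (Stability of the discrete extension operator, Lemma 2.1.) Under assumptions (A1), (A3), (A4) and the approximation hypothesis that for every v ∈ V and every 0 ≤ j ≤ l there exists w⋆ ∈ W^E with N_0(v − w⋆) ≤ C₂ h^j N_j(v), the extension operator E = A ∘ F satisfies: there is a constant C, depending only on C₁, C₂, C₃, C₄, such that N_j(A(F v)) ≤ C N_j(v) for every v ∈ V and every 0 ≤ j ≤ l. -/
/-!
Write `e = v - w⋆` for the approximation of `v` from `W^E`. Since `F` fixes `w⋆` and `A` fixes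
`v`, the defect `A (F v) - v` equals `A (F e - e)`, whose `N_0`-size is `O(N_0 e) = O(h^j N_j v)`
by (A3), (A4) and the approximation property. The inverse inequality (A1) trades the factor
`h^j` for the `j`-th seminorm, so `N_j (A (F v) - v) = O(N_j v)`, and the triangle inequality
finishes.
-/

theorem LinearMap.map_map_sub_eq_of_fixed {R W : Type*} [Ring R] [AddCommGroup W] [Module R W]
    {A F : W →ₗ[R] W} {v w : W} (hAv : A v = v) (hFw : F w = w) :
    A (F v) - v = A (F (v - w) - (v - w)) := by
  rw [map_sub, map_sub, map_sub, map_sub, hFw, hAv]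
  abel

theorem Seminorm.map_sub_le_of_le_mul {𝕜 W : Type*} [SeminormedRing 𝕜] [AddCommGroup W]
    [SMul 𝕜 W] (p q : Seminorm 𝕜 W) {c : ℝ} {x y : W} (hc : 0 ≤ c)
    (hqp : q x ≤ p x) (hy : p y ≤ c * q x) :
    p (y - x) ≤ (c + 1) * p x :=
  calc p (y - x) ≤ p y + p x := map_sub_le_add p _ _
    _ ≤ c * p x + p x := by gcongr; exact hy.trans (by gcongr)
    _ = (c + 1) * p x := by ring

theorem le_mul_of_le_div_mul_of_le_mul {a b r C K t : ℝ} (hC : 0 ≤ C) (ht : 0 < t)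
    (hab : a ≤ C / t * b) (hb : b ≤ K * t * r) :
    a ≤ C * K * r :=
  calc a ≤ C / t * (K * t * r) := hab.trans (by gcongr)
    _ = C * K * r := by field_simp

/-- Stability of the discrete extension operator, Lemma 2.1:
Under assumptions (A1), (A3), (A4) and the approximation hypothesis that for every
`v ∈ V` and every `0 ≤ j ≤ l` there exists `w⋆ ∈ W^E` with
`N_0(v - w⋆) ≤ C₂ h^j N_j(v)`, the extension operator `E = A ∘ F` satisfies
`N_j(A (F v)) ≤ C N_j(v)` for every `v ∈ V` and every `0 ≤ j ≤ l`, where `C` depends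
only on `C₁, C₂, C₃, C₄`. -/
theorem stmt_1 (C₁ C₂ C₃ C₄ : ℝ)
    (hC₁ : 0 < C₁) (hC₂ : 0 < C₂) (hC₃ : 0 < C₃) (hC₄ : 0 < C₄) :
    ∃ C : ℝ, 0 < C ∧
      ∀ (W : Type) [instW : AddCommGroup W] [instWM : Module ℝ W]
        (l : ℕ) (h : ℝ), 0 < h →
        ∀ (N M : ℕ → Seminorm ℝ W) (V WE : Submodule ℝ W) (A F : W →ₗ[ℝ] W),
        -- M_j ≤ N_j (interior seminorm is dominated by the full seminorm)
        (∀ w : W, ∀ j ≤ l, M j w ≤ N j w) →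
        -- Assumption (A1): inverse inequality
        (∀ w : W, ∀ j ≤ l, N j w ≤ C₁ / h ^ j * N 0 w) →
        -- Assumption (A3): A is bounded, maps into V and is the identity on V
        (∀ w : W, A w ∈ V) →
        (∀ w : W, N 0 (A w) ≤ C₃ * N 0 w) →
        (∀ v ∈ V, A v = v) →
        -- Assumption (A4): F is bounded and is the identity on W^E
        (∀ w : W, ∀ j ≤ l, N j (F w) ≤ C₄ * M j w) →
        (∀ w ∈ WE, F w = w) →
        -- approximation hypothesis
        (∀ v ∈ V, ∀ j ≤ l, ∃ ws ∈ WE, N 0 (v - ws) ≤ C₂ * h ^ j * N j v) →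
        ∀ v ∈ V, ∀ j ≤ l, N j (A (F v)) ≤ C * N j v := by
  refine ⟨1 + C₁ * (C₃ * (C₄ + 1) * C₂), by positivity, ?_⟩
  intro W _ _ l h hh N M V WE A F hMN hA1 _ hA3 hAid hA4 hFid happ v hv j hj
  obtain ⟨ws, hws, hap⟩ := happ v hv j hj
  have hN0 : N 0 (A (F v) - v) ≤ C₃ * (C₄ + 1) * C₂ * h ^ j * N j v :=
    calc N 0 (A (F v) - v) = N 0 (A (F (v - ws) - (v - ws))) := by
          rw [LinearMap.map_map_sub_eq_of_fixed (hAid v hv) (hFid ws hws)]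
      _ ≤ C₃ * ((C₄ + 1) * N 0 (v - ws)) := by
          grw [hA3, (N 0).map_sub_le_of_le_mul (M 0) hC₄.le (hMN _ 0 l.zero_le) (hA4 _ 0 l.zero_le)]
      _ ≤ C₃ * ((C₄ + 1) * (C₂ * h ^ j * N j v)) := by grw [hap]
      _ = C₃ * (C₄ + 1) * C₂ * h ^ j * N j v := by ring
  have hNj : N j (A (F v) - v) ≤ C₁ * (C₃ * (C₄ + 1) * C₂) * N j v :=
    le_mul_of_le_div_mul_of_le_mul hC₁.le (pow_pos hh j) (hA1 _ j hj) hN0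
  calc N j (A (F v)) ≤ N j v + N j (A (F v) - v) := le_map_add_map_sub (N j) _ _
    _ ≤ (1 + C₁ * (C₃ * (C₄ + 1) * C₂)) * N j v := by linarith
end

section
/- (Approximation property of the extended space, Lemma 2.2.) Under assumptions (A1) and (A3), let U be a real vector space containing W to which the seminorms N_m, m = 0,…,l, extend. Let v ∈ U, R ≥ 0 and s ≥ 0, and suppose there exist v⋆ ∈ V with N_m(v − v⋆) ≤ C₂ h^{s−m} R for all 0 ≤ m ≤ l, and w⋆ ∈ W^E with N_m(v − w⋆) ≤ C₂ h^{s−m} R for all 0 ≤ m ≤ l. Then the element v⋆^E := A w⋆ ∈ V satisfies N_m(v − A w⋆) ≤ C h^{s−m} R for all 0 ≤ m ≤ l, where C depends only on C₁, C₂, C₃. -/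
/-!
Since `A` fixes `V`, the error splits as `v - A w⋆ = (v - v⋆) + A (v⋆ - w⋆)`. The second term lies
in `V ⊆ W`, so the inverse inequality (A1) and the `N_0`-stability of `A` (A3) bound its `N_m`
seminorm by `C₁ C₃ h^{-m} N_0(v⋆ - w⋆)`, and `N_0(v⋆ - w⋆) ≤ 2 C₂ h^s R` by the triangle inequality
through `v`.
-/

section QuasiProjection

variable {U : Type*} [AddCommGroup U] [Module ℝ U]

theorem Seminorm.map_sub_le_map_sub_add (p : Seminorm ℝ U) (v x y : U) :
    p (x - y) ≤ p (v - x) + p (v - y) := by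
  calc p (x - y) = p ((v - y) - (v - x)) := by rw [sub_sub_sub_cancel_left]
    _ ≤ p (v - y) + p (v - x) := map_sub_le_add p _ _
    _ = p (v - x) + p (v - y) := add_comm _ _

variable {N : ℕ → Seminorm ℝ U} {W V : Submodule ℝ U} {A : U →ₗ[ℝ] U} {C₁ C₃ h : ℝ} {l : ℕ}

theorem map_sub_quasiProjection_le (hVW : V ≤ W) (hC₁ : 0 ≤ C₁) (hh : 0 ≤ h)
    (hinv : ∀ w ∈ W, ∀ j ≤ l, N j w ≤ C₁ / h ^ j * N 0 w)
    (hAV : ∀ w ∈ W, A w ∈ V) (hA : ∀ w ∈ W, N 0 (A w) ≤ C₃ * N 0 w)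
    (hAid : ∀ v ∈ V, A v = v) {vs ws : U} (hvs : vs ∈ V) (hws : ws ∈ W) {m : ℕ} (hm : m ≤ l) :
    N m (vs - A ws) ≤ C₁ * C₃ / h ^ m * N 0 (vs - ws) := by
  have hdiff : vs - ws ∈ W := W.sub_mem (hVW hvs) hws
  have hfix : A (vs - ws) = vs - A ws := by rw [map_sub, hAid vs hvs]
  rw [← hfix]
  calc N m (A (vs - ws)) ≤ C₁ / h ^ m * N 0 (A (vs - ws)) := hinv _ (hVW (hAV _ hdiff)) m hm
    _ ≤ C₁ / h ^ m * (C₃ * N 0 (vs - ws)) := by gcongr; exact hA _ hdiff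
    _ = C₁ * C₃ / h ^ m * N 0 (vs - ws) := by ring

theorem map_sub_quasiProjection_le_add (hVW : V ≤ W) (hC₁ : 0 ≤ C₁) (hC₃ : 0 ≤ C₃) (hh : 0 ≤ h)
    (hinv : ∀ w ∈ W, ∀ j ≤ l, N j w ≤ C₁ / h ^ j * N 0 w)
    (hAV : ∀ w ∈ W, A w ∈ V) (hA : ∀ w ∈ W, N 0 (A w) ≤ C₃ * N 0 w)
    (hAid : ∀ v ∈ V, A v = v) (v : U) {vs ws : U} (hvs : vs ∈ V) (hws : ws ∈ W)
    {m : ℕ} (hm : m ≤ l) :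
    N m (v - A ws) ≤ N m (v - vs) + C₁ * C₃ / h ^ m * (N 0 (v - vs) + N 0 (v - ws)) := by
  calc N m (v - A ws) = N m ((v - vs) + (vs - A ws)) := by rw [sub_add_sub_cancel]
    _ ≤ N m (v - vs) + N m (vs - A ws) := map_add_le_add _ _ _
    _ ≤ N m (v - vs) + C₁ * C₃ / h ^ m * N 0 (vs - ws) := by
        gcongr; exact map_sub_quasiProjection_le hVW hC₁ hh hinv hAV hA hAid hvs hws hm
    _ ≤ N m (v - vs) + C₁ * C₃ / h ^ m * (N 0 (v - vs) + N 0 (v - ws)) := by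
        gcongr; exact (N 0).map_sub_le_map_sub_add v vs ws

end QuasiProjection

/-- Approximation property of the extended space, Lemma 2.2:
Under assumptions (A1) and (A3), stated on an ambient space `U ⊇ W` to which the
seminorms `N_m` extend: if `v ∈ U`, `R ≥ 0`, `s ≥ 0` and there exist `v⋆ ∈ V` and
`w⋆ ∈ W^E` with `N_m(v - v⋆) ≤ C₂ h^{s-m} R` and `N_m(v - w⋆) ≤ C₂ h^{s-m} R` for all
`0 ≤ m ≤ l`, then `v⋆^E := A w⋆ ∈ V` and `N_m(v - A w⋆) ≤ C h^{s-m} R` for all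
`0 ≤ m ≤ l`, where `C` depends only on `C₁, C₂, C₃`. -/
theorem stmt_2 (C₁ C₂ C₃ : ℝ) (hC₁ : 0 < C₁) (hC₂ : 0 < C₂) (hC₃ : 0 < C₃) :
    ∃ C : ℝ, 0 < C ∧
      ∀ (U : Type) [instU : AddCommGroup U] [instUM : Module ℝ U]
        (l : ℕ) (h : ℝ), 0 < h →
        ∀ (N : ℕ → Seminorm ℝ U) (W V WE : Submodule ℝ U), V ≤ W → WE ≤ W →
        ∀ (A : U →ₗ[ℝ] U),
        -- Assumption (A1) on W: inverse inequality
        (∀ w ∈ W, ∀ j ≤ l, N j w ≤ C₁ / h ^ j * N 0 w) →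
        -- Assumption (A3): A is bounded on W, maps W into V and is the identity on V
        (∀ w ∈ W, A w ∈ V) →
        (∀ w ∈ W, N 0 (A w) ≤ C₃ * N 0 w) →
        (∀ v ∈ V, A v = v) →
        ∀ (v : U) (R s : ℝ), 0 ≤ R → 0 ≤ s →
        ∀ vs ∈ V, (∀ m ≤ l, N m (v - vs) ≤ C₂ * h ^ (s - (m : ℝ)) * R) →
        ∀ ws ∈ WE, (∀ m ≤ l, N m (v - ws) ≤ C₂ * h ^ (s - (m : ℝ)) * R) →
        A ws ∈ V ∧ ∀ m ≤ l, N m (v - A ws) ≤ C * h ^ (s - (m : ℝ)) * R := by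
  refine ⟨C₂ + 2 * C₁ * C₂ * C₃, by positivity, ?_⟩
  intro U _ _ l h hh N W V WE hVW hWEW A hinv hAV hA hAid v R s _ _ vs hvs hvsN ws hws hwsN
  refine ⟨hAV ws (hWEW hws), fun m hm => ?_⟩
  have hN0 : N 0 (v - vs) + N 0 (v - ws) ≤ 2 * C₂ * h ^ s * R := by
    have := add_le_add (hvsN 0 l.zero_le) (hwsN 0 l.zero_le)
    simp only [CharP.cast_eq_zero, sub_zero] at this
    linarith
  have hpow : h ^ s / h ^ m = h ^ (s - m) := by rw [Real.rpow_sub hh, Real.rpow_natCast]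
  calc N m (v - A ws)
      ≤ N m (v - vs) + C₁ * C₃ / h ^ m * (N 0 (v - vs) + N 0 (v - ws)) :=
        map_sub_quasiProjection_le_add hVW hC₁.le hC₃.le hh.le hinv hAV hA hAid v hvs
          (hWEW hws) hm
    _ ≤ C₂ * h ^ (s - m) * R + C₁ * C₃ / h ^ m * (2 * C₂ * h ^ s * R) := by
        gcongr; exact hvsN m hm
    _ = (C₂ + 2 * C₁ * C₂ * C₃) * h ^ (s - m) * R := by rw [← hpow]; ring
end

section
/- (Interpolation error estimate, Lemma 2.5.) Under assumptions (A1), (A3), (A4), let U be a real vector space containing W to which the seminorms N_m, m = 0,…,l, extend. Let v ∈ U, R ≥ 0 and s ≥ 0, and suppose: (i) there is an interpolant π v ∈ V with N_m(v − π v) ≤ C_π h^{s−m} R for all 0 ≤ m ≤ l; (ii) there exists w⋆ ∈ W^E with N_m(v − w⋆) ≤ C₂ h^{s−m} R for all 0 ≤ m ≤ l. Then the extended interpolant π^E v := A(F(π v)) satisfies N_m(v − A(F(π v))) ≤ C h^{s−m} R for all 0 ≤ m ≤ l, where C depends only on C₁, C₂, C₃, C₄, C_π. -/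
/-! The extended interpolant differs from `π v` by `A (π v - F (π v))`. Since `F` fixes `w⋆`,
`π v - F (π v) = (π v - w⋆) - F (π v - w⋆)`, so its `N₀`-size is at most `(1 + C₄)` times that of
`π v - w⋆`, which is of order `h^s R` by the triangle inequality through `v`. The stability of `A`
and the inverse inequality (A1) then cost a factor `C₃ C₁ h^{-m}` in the `m`-th seminorm. -/

section

variable {𝕜 U : Type*} [SeminormedRing 𝕜] [AddCommGroup U] [Module 𝕜 U]

theorem Seminorm.map_sub_apply_le_of_apply_eq_self {p : Seminorm 𝕜 U} {W : Submodule 𝕜 U}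
    {F : U →ₗ[𝕜] U} {c : ℝ} (hF : ∀ w ∈ W, p (F w) ≤ c * p w) {x y : U} (hy : F y = y)
    (hxy : x - y ∈ W) : p (x - F x) ≤ (1 + c) * p (x - y) := by
  have hdefect : x - F x = (x - y) - F (x - y) := by rw [map_sub, hy]; abel
  calc p (x - F x) ≤ p (x - y) + p (F (x - y)) := hdefect ▸ map_sub_le_add p _ _
    _ ≤ p (x - y) + c * p (x - y) := by gcongr; exact hF _ hxy
    _ = (1 + c) * p (x - y) := by ring

end

/-- Interpolation error estimate, Lemma 2.5:
Under assumptions (A1), (A3), (A4), stated on an ambient space `U ⊇ W` to which the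
seminorms `N_m` extend: if `v ∈ U`, `R ≥ 0`, `s ≥ 0`, there is an interpolant
`π v ∈ V` with `N_m(v - π v) ≤ C_π h^{s-m} R` for all `0 ≤ m ≤ l`, and there is
`w⋆ ∈ W^E` with `N_m(v - w⋆) ≤ C₂ h^{s-m} R` for all `0 ≤ m ≤ l`, then the extended
interpolant `π^E v := A (F (π v))` satisfies `N_m(v - A (F (π v))) ≤ C h^{s-m} R` for
all `0 ≤ m ≤ l`, where `C` depends only on `C₁, C₂, C₃, C₄, C_π`. -/
theorem stmt_3 (C₁ C₂ C₃ C₄ Cπ : ℝ)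
    (hC₁ : 0 < C₁) (hC₂ : 0 < C₂) (hC₃ : 0 < C₃) (hC₄ : 0 < C₄) (hCπ : 0 < Cπ) :
    ∃ C : ℝ, 0 < C ∧
      ∀ (U : Type) [instU : AddCommGroup U] [instUM : Module ℝ U]
        (l : ℕ) (h : ℝ), 0 < h →
        ∀ (N M : ℕ → Seminorm ℝ U) (W V WE : Submodule ℝ U), V ≤ W → WE ≤ W →
        ∀ (A F : U →ₗ[ℝ] U),
        -- M_j ≤ N_j on W (interior seminorm dominated by full seminorm)
        (∀ w ∈ W, ∀ j ≤ l, M j w ≤ N j w) →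
        -- Assumption (A1) on W: inverse inequality
        (∀ w ∈ W, ∀ j ≤ l, N j w ≤ C₁ / h ^ j * N 0 w) →
        -- Assumption (A3): A is bounded on W, maps W into V and is the identity on V
        (∀ w ∈ W, A w ∈ V) →
        (∀ w ∈ W, N 0 (A w) ≤ C₃ * N 0 w) →
        (∀ v ∈ V, A v = v) →
        -- Assumption (A4): F maps W into W, is bounded and is the identity on W^E
        (∀ w ∈ W, F w ∈ W) →
        (∀ w ∈ W, ∀ j ≤ l, N j (F w) ≤ C₄ * M j w) →
        (∀ w ∈ WE, F w = w) →
        ∀ (v : U) (R s : ℝ), 0 ≤ R → 0 ≤ s →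
        -- (i) the interpolant π v ∈ V and its error bound
        ∀ pv ∈ V, (∀ m ≤ l, N m (v - pv) ≤ Cπ * h ^ (s - (m : ℝ)) * R) →
        -- (ii) the approximation w⋆ ∈ W^E
        ∀ ws ∈ WE, (∀ m ≤ l, N m (v - ws) ≤ C₂ * h ^ (s - (m : ℝ)) * R) →
        ∀ m ≤ l, N m (v - A (F pv)) ≤ C * h ^ (s - (m : ℝ)) * R := by
  refine ⟨Cπ + C₁ * C₃ * (1 + C₄) * (Cπ + C₂), by positivity, ?_⟩
  intro U _ _ l h hh N M W V WE hVW hWEW A F hMN hA1 hAV hAb hAid hFW hFb hFid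
    v R s hR hs pv hpv hpvb ws hws hwsb m hm
  have hpvW : pv ∈ W := hVW hpv
  have hdefectW : pv - F pv ∈ W := W.sub_mem hpvW (hFW pv hpvW)
  have hF0 : ∀ w ∈ W, N 0 (F w) ≤ C₄ * N 0 w := fun w hw =>
    (hFb w hw 0 l.zero_le).trans (by gcongr; exact hMN w hw 0 l.zero_le)
  have hdist : N 0 (pv - ws) ≤ (Cπ + C₂) * h ^ s * R := by
    have hpv0 := hpvb 0 l.zero_le
    have hws0 := hwsb 0 l.zero_le
    simp only [Nat.cast_zero, sub_zero] at hpv0 hws0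
    calc N 0 (pv - ws) = N 0 ((v - ws) - (v - pv)) := by rw [sub_sub_sub_cancel_left]
      _ ≤ N 0 (v - ws) + N 0 (v - pv) := map_sub_le_add _ _ _
      _ ≤ (Cπ + C₂) * h ^ s * R := by linarith
  have hsplit : v - A (F pv) = (v - pv) + A (pv - F pv) := by rw [map_sub, hAid pv hpv]; abel
  calc N m (v - A (F pv)) ≤ N m (v - pv) + N m (A (pv - F pv)) := hsplit ▸ map_add_le_add _ _ _
    _ ≤ N m (v - pv) + C₁ / h ^ m * (C₃ * N 0 (pv - F pv)) := by
      gcongr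
      exact (hA1 _ (hVW (hAV _ hdefectW)) m hm).trans (by gcongr; exact hAb _ hdefectW)
    _ ≤ N m (v - pv) + C₁ / h ^ m * (C₃ * ((1 + C₄) * N 0 (pv - ws))) := by
      gcongr
      exact (N 0).map_sub_apply_le_of_apply_eq_self hF0 (hFid ws hws) (W.sub_mem hpvW (hWEW hws))
    _ ≤ Cπ * h ^ (s - m) * R + C₁ / h ^ m * (C₃ * ((1 + C₄) * ((Cπ + C₂) * h ^ s * R))) := by
      gcongr
      exact hpvb m hm
    _ = (Cπ + C₁ * C₃ * (1 + C₄) * (Cπ + C₂)) * h ^ (s - m) * R := by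
      rw [Real.rpow_sub hh, Real.rpow_natCast]
      field_simp
end

section
/- (Parabolic energy-norm error estimate; core of Theorem 3.4.) In the parabolic setting, let ⦀·⦀_h be a seminorm on V_h and α > 0 with α ⦀v⦀_h² ≤ a_h(v, v) for all v ∈ V_h (coercivity of the Nitsche form). Then α ∫₀ᵀ ⦀e(t)⦀_h² dt ≤ ‖e(0)‖² + 3 (∫₀ᵀ ‖ρ(t)‖ dt)². -/
/-!
Testing the error equation with `v = e t` turns it into the energy inequality
`d/dt ‖e‖² + 2α ⦀e⦀_h² ≤ 2 ‖ρ‖ ‖e‖`. Integrating it, once on `[0, s]` and once on `[0, T]`,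
gives `‖e s‖² ≤ ‖e 0‖² + 2 ∫₀ˢ ‖ρ‖ ‖e‖` and
`2α ∫₀ᵀ ⦀e⦀_h² ≤ ‖e 0‖² + 2 ∫₀ᵀ ‖ρ‖ ‖e‖`. At a maximum point of `‖e‖` the first bound is a
quadratic inequality for `M = max ‖e‖`, whence `M ≤ ‖e 0‖ + 2 ∫₀ᵀ ‖ρ‖`; inserting this into
the second bound and using `2ab ≤ a² + b²` gives the estimate.
-/

open Set MeasureTheory

theorem sub_add_integral_le_integral_of_hasDeriv_right {φ φ' D g : ℝ → ℝ} {a b : ℝ}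
    (hab : a ≤ b) (hφ : ContinuousOn φ (Icc a b))
    (hderiv : ∀ x ∈ Ioo a b, HasDerivWithinAt φ (φ' x) (Ioi x) x)
    (hg : IntegrableOn g (Icc a b)) (hD : ∀ x ∈ Ioo a b, 0 ≤ D x)
    (hle : ∀ x ∈ Ioo a b, φ' x + D x ≤ g x) :
    φ b - φ a + ∫ x in a..b, D x ≤ ∫ x in a..b, g x := by
  by_cases hDi : IntegrableOn D (Icc a b)
  · have h := intervalIntegral.sub_le_integral_of_hasDeriv_right_of_le
      (φ := fun x => g x - D x) hab hφ hderiv (hg.sub hDi)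
      fun x hx => le_sub_iff_add_le.2 (hle x hx)
    rw [intervalIntegral.integral_sub ((intervalIntegrable_iff_integrableOn_Icc_of_le hab).2 hg)
      ((intervalIntegrable_iff_integrableOn_Icc_of_le hab).2 hDi)] at h
    linarith
  · rw [intervalIntegral.integral_undef
      (mt (intervalIntegrable_iff_integrableOn_Icc_of_le hab).1 hDi), add_zero]
    exact intervalIntegral.sub_le_integral_of_hasDeriv_right_of_le hab hφ hderiv hg
      fun x hx => (le_add_of_nonneg_right (hD x hx)).trans (hle x hx)

theorem norm_sq_sub_add_integral_le {H : Type*} [NormedAddCommGroup H] [InnerProductSpace ℝ H]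
    {e e' : ℝ → H} {D g : ℝ → ℝ} {a b s : ℝ} (hs : s ∈ Icc a b)
    (he : ∀ t ∈ Icc a b, HasDerivWithinAt e (e' t) (Icc a b) t)
    (hg : IntegrableOn g (Icc a b)) (hD : ∀ t ∈ Icc a b, 0 ≤ D t)
    (hle : ∀ t ∈ Icc a b, 2 * inner ℝ (e t) (e' t) + D t ≤ g t) :
    ‖e s‖ ^ 2 - ‖e a‖ ^ 2 + ∫ t in a..s, D t ≤ ∫ t in a..s, g t := by
  have hsub : Icc a s ⊆ Icc a b := Icc_subset_Icc_right hs.2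
  have hIoo : Ioo a s ⊆ Icc a b := Ioo_subset_Icc_self.trans hsub
  refine sub_add_integral_le_integral_of_hasDeriv_right (φ := fun t => ‖e t‖ ^ 2) hs.1
    (fun t ht => ((he t (hsub ht)).continuousWithinAt.mono hsub).norm.pow 2) ?_
    (hg.mono_set hsub) (fun x hx => hD x (hIoo hx)) (fun x hx => hle x (hIoo hx))
  intro x hx
  have hxb : x ∈ Ioo a b := ⟨hx.1, hx.2.trans_le hs.2⟩
  exact ((he x (hIoo hx)).norm_sq.hasDerivAt (Icc_mem_nhds hxb.1 hxb.2)).hasDerivWithinAt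

theorem integral_mul_le_mul_integral_of_le {r u : ℝ → ℝ} {a b M : ℝ} (hab : a ≤ b)
    (hr : IntervalIntegrable r volume a b)
    (hru : IntervalIntegrable (fun t => r t * u t) volume a b)
    (hr0 : ∀ t ∈ Icc a b, 0 ≤ r t) (huM : ∀ t ∈ Icc a b, u t ≤ M) :
    ∫ t in a..b, r t * u t ≤ M * ∫ t in a..b, r t :=
  calc ∫ t in a..b, r t * u t
      ≤ ∫ t in a..b, M * r t :=
        intervalIntegral.integral_mono_on hab hru (hr.const_mul M) fun t ht => by
          rw [mul_comm]; exact mul_le_mul_of_nonneg_right (huM t ht) (hr0 t ht)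
    _ = M * ∫ t in a..b, r t := intervalIntegral.integral_const_mul M r

theorem le_add_two_mul_integral_of_sq_le {u r : ℝ → ℝ} {a b : ℝ} (hab : a ≤ b)
    (hu : ContinuousOn u (Icc a b)) (hr : IntegrableOn r (Icc a b))
    (hu0 : ∀ t ∈ Icc a b, 0 ≤ u t) (hr0 : ∀ t ∈ Icc a b, 0 ≤ r t)
    (hsq : ∀ s ∈ Icc a b, u s ^ 2 ≤ u a ^ 2 + 2 * ∫ t in a..s, r t * u t) :
    ∀ s ∈ Icc a b, u s ≤ u a + 2 * ∫ t in a..b, r t := by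
  obtain ⟨t₀, ht₀, hmax⟩ := isCompact_Icc.exists_isMaxOn (nonempty_Icc.2 hab) hu
  set M := u t₀
  set R := ∫ t in a..b, r t
  have hrI : IntervalIntegrable r volume a b :=
    (intervalIntegrable_iff_integrableOn_Icc_of_le hab).2 hr
  have hruI : IntervalIntegrable (fun t => r t * u t) volume a b :=
    (intervalIntegrable_iff_integrableOn_Icc_of_le hab).2 (hr.mul_continuousOn hu isCompact_Icc)
  have hru : ∫ t in a..t₀, r t * u t ≤ M * R :=
    calc ∫ t in a..t₀, r t * u t
        ≤ ∫ t in a..b, r t * u t :=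
          intervalIntegral.integral_mono_interval le_rfl ht₀.1 ht₀.2
            (ae_restrict_of_forall_mem measurableSet_Ioc fun t ht =>
              mul_nonneg (hr0 t (Ioc_subset_Icc_self ht)) (hu0 t (Ioc_subset_Icc_self ht))) hruI
      _ ≤ M * R := integral_mul_le_mul_integral_of_le hab hrI hruI hr0 hmax
  have hR : 0 ≤ R := intervalIntegral.integral_nonneg hab hr0
  have hua := hu0 a (left_mem_Icc.2 hab)
  have hM : M ≤ u a + 2 * R := by nlinarith [hsq t₀ ht₀, hu0 t₀ ht₀]
  exact fun s hs => (hmax hs).trans hM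

theorem stmt_13_general {H : Type*} [NormedAddCommGroup H] [InnerProductSpace ℝ H]
    (Vh : Submodule ℝ H) (ah : H →ₗ[ℝ] H →ₗ[ℝ] ℝ)
    (T : ℝ) (hT : 0 < T)
    (e e' ρ : ℝ → H)
    (he : ∀ t ∈ Set.Icc (0 : ℝ) T, HasDerivWithinAt e (e' t) (Set.Icc 0 T) t)
    (hρ : ContinuousOn ρ (Set.Icc 0 T))
    (heVh : ∀ t ∈ Set.Icc (0 : ℝ) T, e t ∈ Vh)
    -- the error equation
    (herr : ∀ t ∈ Set.Icc (0 : ℝ) T, ∀ v ∈ Vh,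
      (inner ℝ (e' t) v : ℝ) + ah (e t) v = -(inner ℝ (ρ t) v : ℝ))
    -- the energy seminorm and the coercivity of a_h
    (enorm : Seminorm ℝ H) (α : ℝ) (hα : 0 < α)
    (hcoer : ∀ v ∈ Vh, α * enorm v ^ 2 ≤ ah v v) :
    α * ∫ t in (0 : ℝ)..T, enorm (e t) ^ 2 ≤
      ‖e 0‖ ^ 2 + 3 * (∫ t in (0 : ℝ)..T, ‖ρ t‖) ^ 2 := by
  have hecont : ContinuousOn e (Icc 0 T) := fun t ht => (he t ht).continuousWithinAt
  have hρe : ContinuousOn (fun t => ‖ρ t‖ * ‖e t‖) (Icc 0 T) := hρ.norm.mul hecont.norm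
  have hD : ∀ t ∈ Icc 0 T, 0 ≤ 2 * (α * enorm (e t) ^ 2) := fun _ _ => by positivity
  have hpt : ∀ t ∈ Icc 0 T,
      2 * inner ℝ (e t) (e' t) + 2 * (α * enorm (e t) ^ 2) ≤ 2 * (‖ρ t‖ * ‖e t‖) := by
    intro t ht
    have htested := herr t ht (e t) (heVh t ht)
    have hcs := neg_le_of_abs_le (abs_real_inner_le_norm (ρ t) (e t))
    rw [real_inner_comm] at htested
    linarith [hcoer (e t) (heVh t ht)]
  have henergy := fun s (hs : s ∈ Icc 0 T) => norm_sq_sub_add_integral_le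
    (g := fun t => 2 * (‖ρ t‖ * ‖e t‖)) hs he (continuousOn_const.mul hρe).integrableOn_Icc hD hpt
  simp only [intervalIntegral.integral_const_mul] at henergy
  have hsup := le_add_two_mul_integral_of_sq_le hT.le hecont.norm hρ.norm.integrableOn_Icc
    (fun _ _ => norm_nonneg _) (fun _ _ => norm_nonneg _) fun s hs => by
      have : 0 ≤ ∫ t in (0 : ℝ)..s, enorm (e t) ^ 2 :=
        intervalIntegral.integral_nonneg hs.1 fun t _ => sq_nonneg (enorm (e t))
      nlinarith [henergy s hs]
  set R := ∫ t in (0 : ℝ)..T, ‖ρ t‖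
  have hρeR : ∫ t in (0 : ℝ)..T, ‖ρ t‖ * ‖e t‖ ≤ (‖e 0‖ + 2 * R) * R :=
    integral_mul_le_mul_integral_of_le hT.le (hρ.norm.intervalIntegrable_of_Icc hT.le)
      (hρe.intervalIntegrable_of_Icc hT.le) (fun _ _ => norm_nonneg _) hsup
  nlinarith [henergy T (right_mem_Icc.2 hT.le), sq_nonneg (‖e 0‖ - R), sq_nonneg ‖e T‖]

/-- Parabolic energy-norm error estimate; core of Theorem 3.4:
In the parabolic setting (real inner product space `H`, subspace `V_h`, bilinear form
`a_h`, error `e` continuously differentiable on `[0,T]` with values in `V_h`,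
perturbation `ρ` continuous on `[0,T]`, error equation
`⟨e'(t), v⟩ + a_h(e(t), v) = -⟨ρ(t), v⟩` for all `v ∈ V_h`), if `⦀·⦀_h` is a
seminorm on `V_h` and `α ⦀v⦀_h² ≤ a_h(v,v)` for all `v ∈ V_h` with `α > 0`, then
`α ∫₀ᵀ ⦀e(t)⦀_h² dt ≤ ‖e(0)‖² + 3 (∫₀ᵀ ‖ρ(t)‖ dt)²`. -/
theorem stmt_13 {H : Type*} [NormedAddCommGroup H] [InnerProductSpace ℝ H]
    (Vh : Submodule ℝ H) (ah : H →ₗ[ℝ] H →ₗ[ℝ] ℝ)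
    (T : ℝ) (hT : 0 < T)
    (e e' ρ : ℝ → H)
    (he : ∀ t ∈ Set.Icc (0 : ℝ) T, HasDerivWithinAt e (e' t) (Set.Icc 0 T) t)
    (he' : ContinuousOn e' (Set.Icc 0 T))
    (hρ : ContinuousOn ρ (Set.Icc 0 T))
    (heVh : ∀ t ∈ Set.Icc (0 : ℝ) T, e t ∈ Vh)
    -- the error equation
    (herr : ∀ t ∈ Set.Icc (0 : ℝ) T, ∀ v ∈ Vh,
      (inner ℝ (e' t) v : ℝ) + ah (e t) v = -(inner ℝ (ρ t) v : ℝ))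
    -- the energy seminorm and the coercivity of a_h
    (enorm : Seminorm ℝ H) (α : ℝ) (hα : 0 < α)
    (hcoer : ∀ v ∈ Vh, α * enorm v ^ 2 ≤ ah v v) :
    α * ∫ t in (0 : ℝ)..T, enorm (e t) ^ 2 ≤
      ‖e 0‖ ^ 2 + 3 * (∫ t in (0 : ℝ)..T, ‖ρ t‖) ^ 2 :=
  stmt_13_general Vh ah T hT e e' ρ he hρ heVh herr enorm α hα hcoer
end
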